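/- (Predictable Section Theorem) Let (Ω, F, ℙ) be a probability space with a filtration (F_t)_{t∈ℝ₊} satisfying ⋁_t F_t ⊆ F. For every set P in the predictable σ-algebra 𝒫 and every ε > 0 there exists a predictable time ρ such that the graph ⟦ρ⟧ is contained in P and ℙ*(π_Ω(P)) − ℙ({ρ < ∞}) ≤ ε. -/

import Mathlib

open MeasureTheory Set
open scoped NNReal ENNReal

variable {Ω : Type*}

/-- A stopping time with respect to the filtration `𝔽`. -/
def IsStopTime {F : MeasurableSpace Ω} (𝔽 : Filtration ℝ≥0 F) (τ : Ω → ℝ≥0∞) : Prop :=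
  ∀ t : ℝ≥0, MeasurableSet[𝔽 t] {ω | τ ω ≤ (t : ℝ≥0∞)}

/-- A predictable time: a stopping time announced by a nondecreasing sequence of
finite stopping times. -/
def IsPredTime {F : MeasurableSpace Ω} (𝔽 : Filtration ℝ≥0 F) (ρ : Ω → ℝ≥0∞) : Prop :=
  IsStopTime 𝔽 ρ ∧ ∃ ρs : ℕ → Ω → ℝ≥0∞,
    (∀ n, IsStopTime 𝔽 (ρs n)) ∧ (∀ n ω, ρs n ω < ⊤) ∧ (∀ n ω, ρs n ω ≤ ρ ω) ∧
    (∀ n ω, 0 < ρ ω → ρs n ω < ρ ω) ∧ (∀ ω, Monotone fun n => ρs n ω) ∧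
    (∀ ω, Filter.Tendsto (fun n => ρs n ω) Filter.atTop (nhds (ρ ω)))

/-- The graph `⟦τ⟧ ⊆ Ω × ℝ₊` of `τ : Ω → [0,∞]`. -/
def graph (τ : Ω → ℝ≥0∞) : Set (Ω × ℝ≥0) := {p | τ p.1 = (p.2 : ℝ≥0∞)}

/-- The stochastic interval `⟦τ, ∞⟦`. -/
def rayFrom (τ : Ω → ℝ≥0∞) : Set (Ω × ℝ≥0) := {p | τ p.1 ≤ (p.2 : ℝ≥0∞)}

/-- The stochastic interval `⟦ρ, τ⟧`. -/
def stInterval (ρ τ : Ω → ℝ≥0∞) : Set (Ω × ℝ≥0) :=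
  {p | ρ p.1 ≤ (p.2 : ℝ≥0∞) ∧ (p.2 : ℝ≥0∞) ≤ τ p.1}

/-- The predictable σ-algebra on `Ω × ℝ₊`. -/
def predictableSigma {F : MeasurableSpace Ω} (𝔽 : Filtration ℝ≥0 F) :
    MeasurableSpace (Ω × ℝ≥0) :=
  MeasurableSpace.generateFrom {s | ∃ ρ, IsPredTime 𝔽 ρ ∧ s = rayFrom ρ}

/-- The optional σ-algebra on `Ω × ℝ₊`. -/
def optionalSigma {F : MeasurableSpace Ω} (𝔽 : Filtration ℝ≥0 F) :
    MeasurableSpace (Ω × ℝ≥0) :=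
  MeasurableSpace.generateFrom {s | ∃ τ, IsStopTime 𝔽 τ ∧ s = rayFrom τ}

/-- The debut of a set `S ⊆ Ω × ℝ₊`. -/
noncomputable def debut (S : Set (Ω × ℝ≥0)) (ω : Ω) : ℝ≥0∞ :=
  ⨅ (t : ℝ≥0) (_ : (ω, t) ∈ S), (t : ℝ≥0∞)

/-- Projection of a subset of `Ω × ℝ₊` onto `Ω`. -/
def projOmega (S : Set (Ω × ℝ≥0)) : Set Ω := Prod.fst '' S

/-- The outer measure `ℙ*` induced by `ℙ`. -/
noncomputable def pstar {F : MeasurableSpace Ω} (P : Measure Ω) (A : Set Ω) : ℝ≥0∞ :=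
  ⨅ (E : Set Ω) (_ : A ⊆ E) (_ : MeasurableSet E), P E

/-!
Choquet's capacitability argument. Call a set elementary if it is a finite union of stochastic
intervals `⟦ρ, τ⟧` with `ρ` predictable and `τ` a stopping time finite wherever `ρ` is: its
sections are compact, and its debut is a predictable time whose graph lies in the set.
Since `⟦ρ, ∞⟦` and its complement are countable unions of elementary sets, and the sets obtained
from elementary sets by the Suslin operation are closed under countable unions and
intersections, every predictable set `S` is of the form `⋃ σ, ⋂ n, K σ n` for a Suslin scheme `K`
of elementary sets. Continuity of `ℙ*` from below yields a bound `l` such that the decreasing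
elementary sets `B k = ⋃_{σ ≤ l} K σ k` have projections of measure at least `ℙ*(π_Ω S) - ε`.
By König's lemma `⋂ k, B k ⊆ S`, and by compactness of the sections the debut of `⋂ k, B k`
is the supremum of the debuts of the `B k`, hence predictable, and it is finite exactly on
`⋂ k, π_Ω (B k)`.
-/

open Filter Topology

section

variable {F : MeasurableSpace Ω} {𝔽 : Filtration ℝ≥0 F}

theorem isStopTime_const (c : ℝ≥0∞) : IsStopTime 𝔽 fun _ : Ω => c :=
  fun _ => MeasurableSet.const _

theorem isStopTime_iSup {τ : ℕ → Ω → ℝ≥0∞} (hτ : ∀ n, IsStopTime 𝔽 (τ n)) :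
    IsStopTime 𝔽 fun ω => ⨆ n, τ n ω := by
  intro t
  simp only [iSup_le_iff, ofPred_forall]
  exact .iInter fun n => hτ n t

namespace IsStopTime

variable {τ π : Ω → ℝ≥0∞}

/- `ℝ≥0∞` is by definition `WithTop ℝ≥0`, so `IsStopTime` is Mathlib's `IsStoppingTime`. -/
theorem min (hτ : IsStopTime 𝔽 τ) (hπ : IsStopTime 𝔽 π) : IsStopTime 𝔽 fun ω => τ ω ⊓ π ω :=
  IsStoppingTime.min hτ hπ

theorem max (hτ : IsStopTime 𝔽 τ) (hπ : IsStopTime 𝔽 π) : IsStopTime 𝔽 fun ω => τ ω ⊔ π ω :=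
  IsStoppingTime.max hτ hπ

protected theorem measurable (hτ : IsStopTime 𝔽 τ) : Measurable τ := by
  refine measurable_of_Iic fun x => ?_
  induction x using ENNReal.recTopCoe with
  | top => simp
  | coe t => exact 𝔽.le t _ (hτ t)

theorem measurableSet_le_inter_le (hτ : IsStopTime 𝔽 τ) (hπ : IsStopTime 𝔽 π) (t : ℝ≥0) :
    MeasurableSet[𝔽 t] ({ω | τ ω ≤ π ω} ∩ {ω | τ ω ≤ t}) :=
  (IsStoppingTime.measurableSet hτ _).1 (IsStoppingTime.measurableSet_le_stopping_time hτ hπ) |>.2 t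

theorem ite_le (hτ : IsStopTime 𝔽 τ) (hπ : IsStopTime 𝔽 π) (c : ℝ≥0∞) :
    IsStopTime 𝔽 fun ω => if τ ω ≤ π ω then τ ω else c ⊔ τ ω := by
  intro t
  have hle := hτ.measurableSet_le_inter_le hπ t
  have : {ω | (if τ ω ≤ π ω then τ ω else c ⊔ τ ω) ≤ t} =
      ({ω | τ ω ≤ π ω} ∩ {ω | τ ω ≤ t}) ∪
        (({ω | τ ω ≤ t} \ ({ω | τ ω ≤ π ω} ∩ {ω | τ ω ≤ t})) ∩ {_ω | c ≤ t}) := by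
    ext ω
    by_cases h : τ ω ≤ π ω <;> simp [h, and_comm]
  rw [this]
  exact hle.union (((hτ t).diff hle).inter (.const _))

end IsStopTime

structure Announces (𝔽 : Filtration ℝ≥0 F) (σ : ℕ → Ω → ℝ≥0∞) (ρ : Ω → ℝ≥0∞) : Prop where
  isStopTime : ∀ n, IsStopTime 𝔽 (σ n)
  lt_top : ∀ n ω, σ n ω < ⊤
  lt_of_pos : ∀ n ω, 0 < ρ ω → σ n ω < ρ ω
  monotone : ∀ ω, Monotone (σ · ω)
  iSup_eq : ∀ ω, ⨆ n, σ n ω = ρ ω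

namespace Announces

variable {σ : ℕ → Ω → ℝ≥0∞} {ρ : Ω → ℝ≥0∞}

theorem le (h : Announces 𝔽 σ ρ) (n : ℕ) (ω : Ω) : σ n ω ≤ ρ ω :=
  h.iSup_eq ω ▸ le_iSup (σ · ω) n

theorem tendsto (h : Announces 𝔽 σ ρ) (ω : Ω) : Tendsto (σ · ω) atTop (𝓝 (ρ ω)) :=
  h.iSup_eq ω ▸ tendsto_atTop_iSup (h.monotone ω)

theorem lt_of_le {r : ℝ≥0∞} (h : Announces 𝔽 σ ρ) (n : ℕ) {ω : Ω} (hρ : ρ ω ≤ r) (hr : 0 < r) :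
    σ n ω < r := by
  rcases eq_zero_or_pos (ρ ω) with hρ0 | hρ0
  · exact (h.le n ω).trans_lt (hρ0 ▸ hr)
  · exact (h.lt_of_pos n ω hρ0).trans_le hρ

theorem isPredTime (h : Announces 𝔽 σ ρ) : IsPredTime 𝔽 ρ := by
  have hρ : ρ = fun ω => ⨆ n, σ n ω := funext fun ω => (h.iSup_eq ω).symm
  exact ⟨hρ ▸ isStopTime_iSup h.isStopTime, σ, h.isStopTime, h.lt_top, h.le, h.lt_of_pos,
    h.monotone, h.tendsto⟩

end Announces

namespace IsPredTime

variable {ρ ρ' : Ω → ℝ≥0∞}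

theorem exists_announces (hρ : IsPredTime 𝔽 ρ) : ∃ σ, Announces 𝔽 σ ρ :=
  let ⟨_, σ, hσ, hfin, _, hlt, hmono, hlim⟩ := hρ
  ⟨σ, hσ, hfin, hlt, hmono, fun ω => iSup_eq_of_tendsto (hmono ω) (hlim ω)⟩

theorem min (hρ : IsPredTime 𝔽 ρ) (hρ' : IsPredTime 𝔽 ρ') :
    IsPredTime 𝔽 fun ω => ρ ω ⊓ ρ' ω := by
  obtain ⟨σ, hσ⟩ := hρ.exists_announces
  obtain ⟨σ', hσ'⟩ := hρ'.exists_announces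
  refine Announces.isPredTime (σ := fun n ω => σ n ω ⊓ σ' n ω)
    ⟨fun n => (hσ.isStopTime n).min (hσ'.isStopTime n), fun n ω => ?_, fun n ω hpos => ?_,
      fun ω => (hσ.monotone ω).min (hσ'.monotone ω), fun ω => ?_⟩
  · exact inf_le_left.trans_lt (hσ.lt_top n ω)
  · rw [lt_inf_iff] at hpos ⊢
    exact ⟨inf_le_left.trans_lt (hσ.lt_of_pos n ω hpos.1),
      inf_le_right.trans_lt (hσ'.lt_of_pos n ω hpos.2)⟩
  · exact iSup_eq_of_tendsto ((hσ.monotone ω).min (hσ'.monotone ω))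
      ((hσ.tendsto ω).min (hσ'.tendsto ω))

theorem max (hρ : IsPredTime 𝔽 ρ) (hρ' : IsPredTime 𝔽 ρ') :
    IsPredTime 𝔽 fun ω => ρ ω ⊔ ρ' ω := by
  obtain ⟨σ, hσ⟩ := hρ.exists_announces
  obtain ⟨σ', hσ'⟩ := hρ'.exists_announces
  refine Announces.isPredTime (σ := fun n ω => σ n ω ⊔ σ' n ω)
    ⟨fun n => (hσ.isStopTime n).max (hσ'.isStopTime n),
      fun n ω => sup_lt_iff.2 ⟨hσ.lt_top n ω, hσ'.lt_top n ω⟩,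
      fun n ω hpos =>
        sup_lt_iff.2 ⟨hσ.lt_of_le n le_sup_left hpos, hσ'.lt_of_le n le_sup_right hpos⟩,
      fun ω => (hσ.monotone ω).max (hσ'.monotone ω), fun ω => ?_⟩
  exact iSup_eq_of_tendsto ((hσ.monotone ω).max (hσ'.monotone ω))
    ((hσ.tendsto ω).max (hσ'.tendsto ω))

end IsPredTime

theorem isPredTime_top : IsPredTime 𝔽 fun _ : Ω => ⊤ :=
  Announces.isPredTime (σ := fun n _ => n)
    ⟨fun _ => isStopTime_const _, fun _ _ => ENNReal.natCast_lt_top _,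
      fun _ _ _ => ENNReal.natCast_lt_top _, fun _ _ _ h => Nat.cast_le.2 h,
      fun _ => ENNReal.iSup_natCast⟩

theorem isPredTime_iSup {ρ : ℕ → Ω → ℝ≥0∞} (hρ : ∀ k, IsPredTime 𝔽 (ρ k)) :
    IsPredTime 𝔽 fun ω => ⨆ k, ρ k ω := by
  choose σ hσ using fun k => (hρ k).exists_announces
  refine Announces.isPredTime (σ := fun n ω => (Finset.range (n + 1)).sup (σ · n ω))
    ⟨fun n t => ?_, fun n ω => ?_, fun n ω hpos => ?_, fun ω => ?_, fun ω => ?_⟩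
  · simp only [Finset.sup_le_iff, ofPred_forall]
    exact .biInter (Finset.range (n + 1)).countable_toSet fun k _ => (hσ k).isStopTime n t
  · exact (Finset.sup_lt_iff ENNReal.zero_lt_top).2 fun k _ => (hσ k).lt_top n ω
  · exact (Finset.sup_lt_iff hpos).2 fun k _ => (hσ k).lt_of_le n (le_iSup (ρ · ω) k) hpos
  · refine monotone_nat_of_le_succ fun n => Finset.sup_le fun k hk => ?_
    exact ((hσ k).monotone ω n.le_succ).trans
      (Finset.le_sup (f := (σ · (n + 1) ω)) (Finset.range_subset_range.2 (by omega) hk))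
  · refine le_antisymm (iSup_le fun n => Finset.sup_le fun k _ =>
      ((hσ k).le n ω).trans (le_iSup (ρ · ω) k)) (iSup_le fun k => ?_)
    rw [← (hσ k).iSup_eq ω]
    refine iSup_le fun n => ((hσ k).monotone ω (le_max_right k n)).trans ?_
    exact (Finset.le_sup (f := (σ · (max k n) ω)) (by simp)).trans (le_iSup_of_le (max k n) le_rfl)

/- On `{ρ ≤ τ}` the announcing times of `ρ` stay below `τ`; on `{τ < ρ}` they eventually
exceed `τ`, and from then on they are pushed to `∞`. -/
theorem IsPredTime.restrict_le {ρ τ : Ω → ℝ≥0∞} (hρ : IsPredTime 𝔽 ρ) (hτ : IsStopTime 𝔽 τ) :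
    IsPredTime 𝔽 fun ω => if ρ ω ≤ τ ω then ρ ω else ⊤ := by
  obtain ⟨σ, hσ⟩ := hρ.exists_announces
  let σ' (n : ℕ) (ω : Ω) : ℝ≥0∞ := if σ n ω ≤ τ ω then σ n ω else n ⊔ σ n ω
  have hlt_top : ∀ n ω, σ' n ω < ⊤ := fun n ω => by
    unfold σ'
    split_ifs
    exacts [hσ.lt_top n ω, sup_lt_iff.2 ⟨ENNReal.natCast_lt_top n, hσ.lt_top n ω⟩]
  refine Announces.isPredTime (σ := σ') ⟨fun n => (hσ.isStopTime n).ite_le hτ n, hlt_top,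
    fun n ω hpos => ?_, fun ω => ?_, fun ω => ?_⟩
  · by_cases h : ρ ω ≤ τ ω
    · simp only [h, if_true] at hpos ⊢
      simpa [σ', (hσ.le n ω).trans h] using hσ.lt_of_pos n ω hpos
    · simpa [h] using hlt_top n ω
  · refine monotone_nat_of_le_succ fun n => ?_
    simp only [σ']
    have hmono := hσ.monotone ω n.le_succ
    by_cases h₁ : σ (n + 1) ω ≤ τ ω
    · simp [hmono.trans h₁, h₁, hmono]
    · by_cases h₀ : σ n ω ≤ τ ω
      · simp [h₀, h₁, le_sup_of_le_right hmono]
      · simp only [h₀, h₁, if_false]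
        exact sup_le_sup (Nat.cast_le.2 n.le_succ) hmono
  · by_cases h : ρ ω ≤ τ ω
    · simp only [σ', h, if_true, fun n => (hσ.le n ω).trans h]
      exact hσ.iSup_eq ω
    · simp only [h, if_false]
      obtain ⟨N, hN⟩ : ∃ N, τ ω < σ N ω := lt_iSup_iff.1 (hσ.iSup_eq ω ▸ not_le.1 h)
      refine top_unique (ENNReal.iSup_natCast ▸ iSup_le fun m => ?_)
      have hm : τ ω < σ (m ⊔ N) ω := hN.trans_le (hσ.monotone ω le_sup_right)
      calc (m : ℝ≥0∞) ≤ (m ⊔ N : ℕ) := Nat.cast_le.2 le_sup_left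
        _ ≤ σ' (m ⊔ N) ω := by simp [σ', not_le.2 hm]
        _ ≤ _ := le_iSup_of_le (m ⊔ N) le_rfl

theorem isPredTime_indicator_top {A : Set Ω} (hA : MeasurableSet[𝔽 0] A) :
    IsPredTime 𝔽 (A.indicator fun _ => ⊤) := by
  refine Announces.isPredTime (σ := fun n => A.indicator fun _ => n)
    ⟨fun n t => ?_, fun n ω => ?_, fun n ω hpos => ?_, fun ω m n hmn => ?_, fun ω => ?_⟩
  · have : {ω | A.indicator (fun _ => (n : ℝ≥0∞)) ω ≤ t} = Aᶜ ∪ {_ω | (n : ℝ≥0∞) ≤ t} := by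
      ext ω
      by_cases h : ω ∈ A <;> simp [h]
    rw [this]
    exact (𝔽.mono (zero_le (a := t)) _ hA.compl).union (.const _)
  all_goals by_cases h : ω ∈ A <;> simp_all [Nat.cast_le.2, ENNReal.iSup_natCast]

theorem mem_projOmega {L : Set (Ω × ℝ≥0)} {ω : Ω} :
    ω ∈ projOmega L ↔ (Prod.mk ω ⁻¹' L).Nonempty :=
  ⟨fun ⟨⟨_, t⟩, hp, he⟩ => ⟨t, he ▸ hp⟩, fun ⟨t, ht⟩ => ⟨(ω, t), ht, rfl⟩⟩

theorem projOmega_iInter_of_antitone {B : ℕ → Set (Ω × ℝ≥0)} (hB : Antitone B)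
    (hc : ∀ n ω, IsCompact (Prod.mk ω ⁻¹' B n)) :
    projOmega (⋂ n, B n) = ⋂ n, projOmega (B n) := by
  refine (image_iInter_subset _ _).antisymm fun ω hω => mem_projOmega.2 ?_
  rw [preimage_iInter]
  exact IsCompact.nonempty_iInter_of_sequence_nonempty_isCompact_isClosed _
    (fun n => preimage_mono (hB n.le_succ)) (fun n => mem_projOmega.1 (mem_iInter.1 hω n))
    (hc 0 ω) fun n => (hc n ω).isClosed

section Debut

variable {L M : Set (Ω × ℝ≥0)} {ω : Ω}

theorem debut_le_of_mem {t : ℝ≥0} (h : (ω, t) ∈ L) : debut L ω ≤ t :=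
  iInf₂_le t h

theorem debut_anti (h : L ⊆ M) : debut M ω ≤ debut L ω :=
  le_iInf₂ fun _ ht => debut_le_of_mem (h ht)

theorem debut_lt_top_iff : debut L ω < ⊤ ↔ ω ∈ projOmega L := by
  simp [debut, iInf_lt_iff, mem_projOmega, Set.Nonempty]

theorem debut_empty : debut (∅ : Set (Ω × ℝ≥0)) = fun _ => ⊤ := by
  funext ω
  simp [debut]

theorem debut_union : debut (L ∪ M) ω = debut L ω ⊓ debut M ω :=
  le_antisymm (le_inf (debut_anti subset_union_left) (debut_anti subset_union_right))
    (le_iInf₂ fun _ ht => ht.elim (inf_le_left.trans ∘ debut_le_of_mem)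
      (inf_le_right.trans ∘ debut_le_of_mem))

theorem debut_stInterval (ρ τ : Ω → ℝ≥0∞) :
    debut (stInterval ρ τ) ω = if ρ ω ≤ τ ω then ρ ω else ⊤ := by
  refine le_antisymm ?_ (le_iInf₂ fun t ht => ?_)
  · split_ifs with h
    · induction hρ : ρ ω using ENNReal.recTopCoe with
      | top => exact le_top
      | coe r => exact debut_le_of_mem ⟨hρ.le, hρ ▸ h⟩
    · exact le_top
  · rw [if_pos (ht.1.trans ht.2)]
    exact ht.1

theorem mk_debut_mem (hL : IsClosed (Prod.mk ω ⁻¹' L)) (hω : ω ∈ projOmega L) :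
    (ω, (debut L ω).toNNReal) ∈ L := by
  have hne := mem_projOmega.1 hω
  have : debut L ω = ↑(sInf (Prod.mk ω ⁻¹' L)) := (ENNReal.coe_sInf hne).symm
  rw [this, ENNReal.toNNReal_coe]
  exact hL.csInf_mem hne (OrderBot.bddBelow _)

theorem graph_debut_subset (hL : ∀ ω, IsClosed (Prod.mk ω ⁻¹' L)) : graph (debut L) ⊆ L := by
  rintro ⟨ω, t⟩ (ht : debut L ω = t)
  have hω : ω ∈ projOmega L := debut_lt_top_iff.1 (ht ▸ ENNReal.coe_lt_top)
  simpa [ht] using mk_debut_mem (hL ω) hω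

/- Cut the sets at the height `r` of the supremum of the debuts and use compactness of the
sections. -/
theorem debut_iInter_of_antitone {B : ℕ → Set (Ω × ℝ≥0)} (hB : Antitone B)
    (hc : ∀ n ω, IsCompact (Prod.mk ω ⁻¹' B n)) :
    debut (⋂ n, B n) ω = ⨆ n, debut (B n) ω := by
  refine le_antisymm ?_ (iSup_le fun n => debut_anti (iInter_subset B n))
  induction hr : ⨆ n, debut (B n) ω using ENNReal.recTopCoe with
  | top => exact le_top
  | coe r =>
    have hle : ∀ n, debut (B n) ω ≤ r := fun n => hr ▸ le_iSup (fun n => debut (B n) ω) n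
    let C n := B n ∩ {p | p.2 ≤ r}
    have hC : ∀ n ω, IsCompact (Prod.mk ω ⁻¹' C n) := fun n ω =>
      (hc n ω).inter_right isClosed_Iic
    have hCω : ∀ n, ω ∈ projOmega (C n) := fun n => by
      have hω := debut_lt_top_iff.1 ((hle n).trans_lt ENNReal.coe_lt_top)
      refine ⟨_, ⟨mk_debut_mem (hc n ω).isClosed hω, ?_⟩, rfl⟩
      simpa using ENNReal.toNNReal_mono ENNReal.coe_ne_top (hle n)
    obtain ⟨⟨_, t⟩, ht, rfl⟩ : ω ∈ projOmega (⋂ n, C n) := by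
      rw [projOmega_iInter_of_antitone (fun m n h => inter_subset_inter_left _ (hB h)) hC]
      exact mem_iInter.2 hCω
    calc _ ≤ debut (⋂ n, C n) _ := debut_anti (iInter_mono fun n => inter_subset_left)
      _ ≤ t := debut_le_of_mem ht
      _ ≤ r := ENNReal.coe_le_coe.2 (mem_iInter.1 ht 0).2

end Debut

/- The finiteness condition on `τ` makes all sections compact. -/
inductive IsElementary (𝔽 : Filtration ℝ≥0 F) : Set (Ω × ℝ≥0) → Prop
  | empty : IsElementary 𝔽 ∅
  | union_stInterval {L : Set (Ω × ℝ≥0)} {ρ τ : Ω → ℝ≥0∞} : IsElementary 𝔽 L →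
      IsPredTime 𝔽 ρ → IsStopTime 𝔽 τ → (∀ ω, ρ ω < ⊤ → τ ω < ⊤) →
      IsElementary 𝔽 (L ∪ stInterval ρ τ)

theorem isCompact_preimage_mk_stInterval {ρ τ : Ω → ℝ≥0∞} (hfin : ∀ ω, ρ ω < ⊤ → τ ω < ⊤)
    (ω : Ω) : IsCompact (Prod.mk ω ⁻¹' stInterval ρ τ) := by
  induction hρ : ρ ω using ENNReal.recTopCoe with
  | top => simp [stInterval, hρ]
  | coe r =>
    lift τ ω to ℝ≥0 using (hfin ω (hρ ▸ ENNReal.coe_lt_top)).ne with s hs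
    have : Prod.mk ω ⁻¹' stInterval ρ τ = Icc r s := by
      ext t
      simp [stInterval, hρ, ← hs]
    exact this ▸ isCompact_Icc

namespace IsElementary

variable {L M : Set (Ω × ℝ≥0)}

theorem stInterval {ρ τ : Ω → ℝ≥0∞} (hρ : IsPredTime 𝔽 ρ) (hτ : IsStopTime 𝔽 τ)
    (hfin : ∀ ω, ρ ω < ⊤ → τ ω < ⊤) : IsElementary 𝔽 (stInterval ρ τ) := by
  simpa using empty.union_stInterval hρ hτ hfin

theorem union (hL : IsElementary 𝔽 L) (hM : IsElementary 𝔽 M) : IsElementary 𝔽 (L ∪ M) := by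
  induction hM with
  | empty => simpa
  | union_stInterval _ hρ hτ hfin ih => simpa [union_assoc] using ih.union_stInterval hρ hτ hfin

theorem inter_stInterval {ρ τ : Ω → ℝ≥0∞} (hL : IsElementary 𝔽 L) (hρ : IsPredTime 𝔽 ρ)
    (hτ : IsStopTime 𝔽 τ) : IsElementary 𝔽 (L ∩ _root_.stInterval ρ τ) := by
  induction hL with
  | empty => simpa using empty
  | @union_stInterval L ρ' τ' _ hρ' hτ' hfin' ih =>
    have : _root_.stInterval ρ' τ' ∩ _root_.stInterval ρ τ =
        _root_.stInterval (fun ω => ρ' ω ⊔ ρ ω) (fun ω => τ' ω ⊓ τ ω) := by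
      ext p
      simp only [_root_.stInterval, mem_inter_iff, mem_ofPred_eq, sup_le_iff, le_inf_iff]
      tauto
    rw [union_inter_distrib_right, this]
    exact ih.union_stInterval (hρ'.max hρ) (hτ'.min hτ) fun ω h =>
      inf_le_left.trans_lt (hfin' ω (sup_lt_iff.1 h).1)

theorem inter (hL : IsElementary 𝔽 L) (hM : IsElementary 𝔽 M) : IsElementary 𝔽 (L ∩ M) := by
  induction hM with
  | empty => simpa using empty
  | union_stInterval _ hρ hτ _ ih =>
    rw [inter_union_distrib_left]
    exact ih.union (hL.inter_stInterval hρ hτ)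

theorem isCompact_preimage_mk (hL : IsElementary 𝔽 L) (ω : Ω) :
    IsCompact (Prod.mk ω ⁻¹' L) := by
  induction hL with
  | empty => exact isCompact_empty
  | union_stInterval _ _ _ hfin ih => exact ih.union (isCompact_preimage_mk_stInterval hfin ω)

theorem measurableSet_projOmega (hL : IsElementary 𝔽 L) : MeasurableSet (projOmega L) := by
  induction hL with
  | empty => simp [projOmega]
  | @union_stInterval L ρ τ _ hρ hτ _ ih =>
    have : projOmega (_root_.stInterval ρ τ) = {ω | ρ ω ≤ τ ω} ∩ {ω | ρ ω < ⊤} := by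
      ext ω
      rw [← debut_lt_top_iff, debut_stInterval]
      split_ifs with h <;> simp [h]
    rw [projOmega, image_union, ← projOmega, ← projOmega, this]
    exact ih.union ((measurableSet_le hρ.1.measurable hτ.measurable).inter
      (measurableSet_lt hρ.1.measurable measurable_const))

theorem isPredTime_debut (hL : IsElementary 𝔽 L) : IsPredTime 𝔽 (debut L) := by
  induction hL with
  | empty => exact debut_empty ▸ isPredTime_top
  | @union_stInterval L ρ τ _ hρ hτ _ ih =>
    have : debut (L ∪ _root_.stInterval ρ τ) =
        fun ω => debut L ω ⊓ if ρ ω ≤ τ ω then ρ ω else ⊤ :=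
      funext fun ω => by rw [debut_union, debut_stInterval]
    rw [this]
    exact ih.min (hρ.restrict_le hτ)

end IsElementary

theorem isElementary_sUnion {𝒮 : Set (Set (Ω × ℝ≥0))} (h𝒮 : 𝒮.Finite)
    (h : ∀ L ∈ 𝒮, IsElementary 𝔽 L) : IsElementary 𝔽 (⋃₀ 𝒮) := by
  induction 𝒮, h𝒮 using Set.Finite.induction_on with
  | empty => simpa using IsElementary.empty
  | insert _ _ ih =>
    rw [sUnion_insert]
    exact (h _ (mem_insert _ _)).union (ih fun L hL => h L (mem_insert_of_mem _ hL))

theorem isElementary_biInter_le {L : ℕ → Set (Ω × ℝ≥0)} (hL : ∀ i, IsElementary 𝔽 (L i))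
    (n : ℕ) : IsElementary 𝔽 (⋂ i ≤ n, L i) := by
  induction n with
  | zero => simpa using hL 0
  | succ n ih =>
    rw [biInter_le_succ]
    exact ih.inter (hL (n + 1))

structure IsSuslinScheme (𝔽 : Filtration ℝ≥0 F) (K : (ℕ → ℕ) → ℕ → Set (Ω × ℝ≥0)) : Prop where
  isElementary : ∀ σ n, IsElementary 𝔽 (K σ n)
  dependsOn : ∀ n, DependsOn (K · n) (Iic n)
  antitone : ∀ σ, Antitone (K σ)

def IsSuslin (𝔽 : Filtration ℝ≥0 F) (A : Set (Ω × ℝ≥0)) : Prop :=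
  ∃ K, IsSuslinScheme 𝔽 K ∧ A = ⋃ σ, ⋂ n, K σ n

theorem IsElementary.isSuslin {L : Set (Ω × ℝ≥0)} (hL : IsElementary 𝔽 L) : IsSuslin 𝔽 L :=
  ⟨fun _ _ => L, ⟨fun _ _ => hL, fun _ _ _ _ => rfl, fun _ => antitone_const⟩,
    by beta_reduce; rw [iInter_const, iUnion_const]⟩

namespace IsSuslin

/- `σ 0` encodes a pair `(j, τ 0)`: `j` selects the set `A j`, and `τ` is an index sequence of
its scheme, equal to `σ` from the second index on. -/
theorem iUnion {A : ℕ → Set (Ω × ℝ≥0)} (hA : ∀ j, IsSuslin 𝔽 (A j)) : IsSuslin 𝔽 (⋃ j, A j) := by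
  choose K hK hA using hA
  let shift (σ : ℕ → ℕ) : ℕ → ℕ := Function.update σ 0 (Nat.unpair (σ 0)).2
  refine ⟨fun σ => K (Nat.unpair (σ 0)).1 (shift σ), ⟨fun σ n => (hK _).isElementary _ n,
    fun n σ σ' h => ?_, fun σ => (hK _).antitone _⟩, ?_⟩
  · simp only [h 0 (zero_le (a := n))]
    refine (hK _).dependsOn n fun i hi => ?_
    rcases eq_or_ne i 0 with rfl | hi0
    · simp [shift, h 0 (zero_le (a := n))]
    · simp [shift, hi0, h i hi]
  · ext x
    simp only [hA, mem_iUnion, mem_iInter]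
    constructor
    · rintro ⟨j, σ, hσ⟩
      refine ⟨Function.update σ 0 (Nat.pair j (σ 0)), fun n => ?_⟩
      simpa [shift] using hσ n
    · rintro ⟨σ, hσ⟩
      exact ⟨_, _, hσ⟩

/- The index `σ (Nat.pair j m)` is the `m`-th index of the scheme of `A j`; at stage `n` we
intersect the finitely many sets coded by `i ≤ n`. -/
theorem iInter {A : ℕ → Set (Ω × ℝ≥0)} (hA : ∀ j, IsSuslin 𝔽 (A j)) : IsSuslin 𝔽 (⋂ j, A j) := by
  choose K hK hA using hA
  let L (σ : ℕ → ℕ) (i : ℕ) : Set (Ω × ℝ≥0) :=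
    K (Nat.unpair i).1 (fun m => σ (Nat.pair (Nat.unpair i).1 m)) (Nat.unpair i).2
  have hL : ∀ σ, ⋂ i, L σ i = ⋂ j, ⋂ m, K j (fun m => σ (Nat.pair j m)) m := fun σ => by
    ext x
    simp only [mem_iInter]
    exact ⟨fun h j m => by simpa [L] using h (Nat.pair j m), fun h i => h _ _⟩
  refine ⟨fun σ n => ⋂ i ≤ n, L σ i,
    ⟨fun σ n => isElementary_biInter_le (fun i => (hK _).isElementary _ _) n,
      fun n σ σ' h => iInter₂_congr fun i hi => ?_,
      fun σ m n hmn _ hx => mem_iInter₂.2 fun i hi => mem_iInter₂.1 hx i (hi.trans hmn)⟩, ?_⟩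
  · refine (hK _).dependsOn _ fun m hm => h _ ?_
    calc Nat.pair (Nat.unpair i).1 m ≤ Nat.pair (Nat.unpair i).1 (Nat.unpair i).2 :=
          StrictMono.monotone (fun _ _ => Nat.pair_lt_pair_right _) hm
      _ = i := Nat.pair_unpair i
      _ ≤ n := hi
  · ext x
    simp only [biInter_le_eq_iInter, hL, hA, mem_iInter, mem_iUnion]
    constructor
    · intro h
      choose τ hτ using h
      exact ⟨fun p => τ (Nat.unpair p).1 (Nat.unpair p).2, fun j m => by simpa using hτ j m⟩
    · rintro ⟨σ, hσ⟩ j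
      exact ⟨_, hσ j⟩

end IsSuslin

theorem isSuslin_rayFrom {ρ : Ω → ℝ≥0∞} (hρ : IsPredTime 𝔽 ρ) : IsSuslin 𝔽 (rayFrom ρ) := by
  have : rayFrom ρ = ⋃ n : ℕ, stInterval ρ fun ω => ρ ω ⊔ n := by
    ext ⟨ω, t⟩
    simp only [rayFrom, stInterval, mem_ofPred_eq, mem_iUnion]
    refine ⟨fun h => ?_, fun ⟨_, h, _⟩ => h⟩
    obtain ⟨n, hn⟩ := exists_nat_ge t
    exact ⟨n, h, le_sup_of_le_right (by exact_mod_cast hn)⟩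
  rw [this]
  exact IsSuslin.iUnion fun n => (IsElementary.stInterval hρ (hρ.1.max (isStopTime_const _))
    fun ω h => sup_lt_iff.2 ⟨h, ENNReal.natCast_lt_top n⟩).isSuslin

/- `⟦ρ, ∞⟦ᶜ = ⋃ n, ⟦0_{ρ > 0}, σ n⟧` for an announcing sequence `σ` of `ρ`, where `0_{ρ > 0}` is
`0` on `{ρ > 0}` and `∞` on `{ρ = 0}`. -/
theorem isSuslin_compl_rayFrom {ρ : Ω → ℝ≥0∞} (hρ : IsPredTime 𝔽 ρ) :
    IsSuslin 𝔽 (rayFrom ρ)ᶜ := by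
  obtain ⟨σ, hσ⟩ := hρ.exists_announces
  let χ : Ω → ℝ≥0∞ := {ω | ρ ω ≤ (0 : ℝ≥0)}.indicator fun _ => ⊤
  have : (rayFrom ρ)ᶜ = ⋃ n, stInterval χ (σ n) := by
    ext ⟨ω, t⟩
    simp only [rayFrom, stInterval, mem_compl_iff, mem_ofPred_eq, not_le, mem_iUnion]
    by_cases h0 : ρ ω = 0
    · simp [χ, h0]
    · have hpos := pos_iff_ne_zero.2 h0
      simp only [χ, indicator_of_notMem (by simpa using h0 : ω ∉ {ω | ρ ω ≤ (0 : ℝ≥0)}),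
        zero_le, true_and]
      refine ⟨fun h => ?_, fun ⟨n, hn⟩ => hn.trans_lt (hσ.lt_of_pos n ω hpos)⟩
      exact (lt_iSup_iff.1 (hσ.iSup_eq ω ▸ h)).imp fun _ => le_of_lt
  rw [this]
  exact IsSuslin.iUnion fun n => (IsElementary.stInterval (isPredTime_indicator_top (hρ.1 0))
    (hσ.isStopTime n) fun ω _ => hσ.lt_top n ω).isSuslin

theorem isSuslin_of_measurableSet_predictableSigma {S : Set (Ω × ℝ≥0)}
    (hS : MeasurableSet[predictableSigma 𝔽] S) : IsSuslin 𝔽 S := by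
  refine (MeasurableSpace.generateFrom_induction _ (fun S _ => IsSuslin 𝔽 S ∧ IsSuslin 𝔽 Sᶜ)
    ?_ ?_ ?_ ?_ S hS).1
  · rintro _ ⟨ρ, hρ, rfl⟩ -
    exact ⟨isSuslin_rayFrom hρ, isSuslin_compl_rayFrom hρ⟩
  · have : (∅ : Set (Ω × ℝ≥0))ᶜ = (rayFrom fun _ => ⊤)ᶜ := by simp [rayFrom]
    exact ⟨IsElementary.empty.isSuslin, this ▸ isSuslin_compl_rayFrom isPredTime_top⟩
  · exact fun S _ h => ⟨h.2, (compl_compl S).symm ▸ h.1⟩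
  · intro S _ h
    rw [compl_iUnion]
    exact ⟨.iUnion fun n => (h n).1, .iInter fun n => (h n).2⟩

theorem isClosed_setOf_of_dependsOn {ι : Type*} {α : ι → Type*} [∀ i, TopologicalSpace (α i)]
    [∀ i, DiscreteTopology (α i)] {Q : (∀ i, α i) → Prop} {s : Set ι} (hs : s.Finite)
    (hQ : DependsOn Q s) : IsClosed {x | Q x} := by
  refine isOpen_compl_iff.1 (isOpen_iff_forall_mem_open.2 fun x hx => ?_)
  refine ⟨s.pi fun i => {x i}, fun y hy hQy => hx ?_,
    isOpen_set_pi hs fun i _ => isOpen_discrete _, fun i _ => rfl⟩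
  exact cast (hQ fun i hi => hy i hi) hQy

/- The sequence `l` is built one coordinate at a time: `l k` is the value chosen at step `k + 1`,
which later steps no longer change. -/
theorem exists_forall_of_forall_exists_update {p : (ℕ → ℕ) → ℕ → Prop}
    (hp : ∀ k, DependsOn (p · k) (Iio k)) (h0 : p 0 0)
    (hstep : ∀ l k, p l k → ∃ j, p (Function.update l k j) (k + 1)) : ∃ l, ∀ k, p l k := by
  choose! g hg using hstep
  let L (k : ℕ) : ℕ → ℕ := Nat.rec 0 (fun k Lk => Function.update Lk k (g Lk k)) k
  have hL : ∀ k, p (L k) k := fun k => by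
    induction k with
    | zero => exact h0
    | succ k ih => exact hg _ _ ih
  have hstab : ∀ i k, i < k → L k i = L (i + 1) i := fun i k hik => by
    induction k with
    | zero => omega
    | succ k ih =>
      rcases (Nat.lt_succ_iff.1 hik).eq_or_lt with rfl | hik
      · rfl
      · exact (Function.update_of_ne hik.ne _ _).trans (ih hik)
  exact ⟨fun i => L (i + 1) i, fun k => cast (hp k fun i hi => hstab i k hi) (hL k)⟩

/- Continuity from below of the (outer) measure `μ`, applied to one coordinate at a time. -/
theorem exists_forall_lt_measure_biUnion_pi {α : Type*} [MeasurableSpace α] (μ : Measure α)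
    (T : (ℕ → ℕ) → Set α) {a : ℝ≥0∞} (ha : a < μ (⋃ σ, T σ)) :
    ∃ l : ℕ → ℕ, ∀ k, a < μ (⋃ σ ∈ (Iio k).pi fun i => Iic (l i), T σ) := by
  refine exists_forall_of_forall_exists_update (fun k l l' h => ?_) (by simpa using ha)
    fun l k hlk => ?_
  · simp only [pi_congr rfl fun i hi => congrArg Iic (h i hi)]
  · have hcover : (Iio k).pi (fun i => Iic (l i)) =
        ⋃ j, (Iio (k + 1)).pi fun i => Iic (Function.update l k j i) := by
      ext σ
      simp only [Set.mem_pi, mem_Iio, mem_Iic, mem_iUnion, Function.update_apply]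
      refine ⟨fun h => ⟨σ k, fun i hi => ?_⟩, fun ⟨j, h⟩ i hi => ?_⟩
      · split_ifs with hik
        exacts [hik ▸ le_rfl, h i (by omega)]
      · simpa [hi.ne] using h i (by omega)
    have hmono : Monotone fun j =>
        ⋃ σ ∈ (Iio (k + 1)).pi fun i => Iic (Function.update l k j i), T σ := by
      refine fun j j' hj => biUnion_subset_biUnion_left (pi_mono fun i _ => Iic_subset_Iic.2 ?_)
      simp only [Function.update_apply]
      split_ifs
      exacts [hj, le_rfl]
    rw [hcover, biUnion_iUnion, hmono.measure_iUnion] at hlk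
    exact lt_iSup_iff.1 hlk

namespace IsSuslinScheme

variable {K : (ℕ → ℕ) → ℕ → Set (Ω × ℝ≥0)} (hK : IsSuslinScheme 𝔽 K) (l : ℕ → ℕ)
include hK

theorem isElementary_biUnion_pi (k : ℕ) :
    IsElementary 𝔽 (⋃ σ ∈ univ.pi fun i => Iic (l i), K σ k) := by
  obtain ⟨g, hg⟩ := dependsOn_iff_exists_comp.1 (hK.dependsOn k)
  rw [← sUnion_image]
  refine isElementary_sUnion ?_ (forall_mem_image.2 fun σ _ => hK.isElementary σ k)
  have hfin : (univ.pi fun i : Iic k => Iic (l i)).Finite := Finite.pi fun i => finite_Iic _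
  refine (hfin.image g).subset ?_
  rintro _ ⟨σ, hσ, rfl⟩
  exact ⟨(Iic k).domRestrict σ, fun i _ => hσ i trivial, by rw [hg]; rfl⟩

theorem biUnion_pi_Iio_subset (k : ℕ) :
    ⋃ σ ∈ (Iio (k + 1)).pi (fun i => Iic (l i)), ⋂ n, K σ n ⊆
      ⋃ σ ∈ univ.pi fun i => Iic (l i), K σ k := by
  refine iUnion₂_subset fun σ hσ => (iInter_subset _ k).trans ?_
  have : K σ k = K (fun i => min (σ i) (l i)) k :=
    hK.dependsOn k fun i hi => (min_eq_left (hσ i (Nat.lt_succ_of_le hi))).symm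
  rw [this]
  exact subset_biUnion_of_mem (u := fun σ => K σ k) fun i _ => mem_Iic.2 (min_le_right _ _)

/- König's lemma, in the form of Cantor's intersection theorem in the compact space of
sequences bounded by `l`. -/
theorem iInter_biUnion_pi_subset :
    ⋂ k, ⋃ σ ∈ univ.pi (fun i => Iic (l i)), K σ k ⊆ ⋃ σ, ⋂ n, K σ n := by
  intro x hx
  let C k := univ.pi (fun i => Iic (l i)) ∩ {σ | x ∈ K σ k}
  have hC : ∀ k, IsClosed (C k) := fun k =>
    (isClosed_set_pi fun i _ => isClosed_Iic).inter
      (isClosed_setOf_of_dependsOn (finite_Iic k) fun _ _ h => congrArg (x ∈ ·) (hK.dependsOn k h))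
  obtain ⟨σ, hσ⟩ := IsCompact.nonempty_iInter_of_sequence_nonempty_isCompact_isClosed C
    (fun k => inter_subset_inter_right _ fun σ h => hK.antitone σ k.le_succ h)
    (fun k => by simpa [C, Set.Nonempty] using mem_iInter.1 hx k)
    ((isCompact_univ_pi fun i => (finite_Iic _).isCompact).of_isClosed_subset (hC 0)
      inter_subset_left) hC
  exact mem_iUnion.2 ⟨σ, mem_iInter.2 fun n => (mem_iInter.1 hσ n).2⟩

end IsSuslinScheme

theorem IsSuslin.exists_isPredTime_graph_subset {A : Set (Ω × ℝ≥0)} (hA : IsSuslin 𝔽 A)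
    (P : Measure Ω) [IsFiniteMeasure P] {a : ℝ≥0∞} (ha : a < P (projOmega A)) :
    ∃ ρ, IsPredTime 𝔽 ρ ∧ graph ρ ⊆ A ∧ a ≤ P {ω | ρ ω < ⊤} := by
  obtain ⟨K, hK, rfl⟩ := hA
  rw [projOmega, image_iUnion] at ha
  obtain ⟨l, hl⟩ := exists_forall_lt_measure_biUnion_pi P _ ha
  let B k := ⋃ σ ∈ univ.pi fun i => Iic (l i), K σ k
  have hB : ∀ k, IsElementary 𝔽 (B k) := hK.isElementary_biUnion_pi l
  have hanti : Antitone B := fun m n hmn => biUnion_mono subset_rfl fun σ _ => hK.antitone σ hmn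
  have hc : ∀ k ω, IsCompact (Prod.mk ω ⁻¹' B k) := fun k => (hB k).isCompact_preimage_mk
  have hPB : ∀ k, a < P (projOmega (B k)) := fun k => by
    refine (hl (k + 1)).trans_le (measure_mono ?_)
    rw [← image_iUnion₂]
    exact image_mono (hK.biUnion_pi_Iio_subset l k)
  refine ⟨debut (⋂ k, B k), ?_, ?_, ?_⟩
  · rw [show debut (⋂ k, B k) = fun ω => ⨆ k, debut (B k) ω from
      funext fun _ => debut_iInter_of_antitone hanti hc]
    exact isPredTime_iSup fun k => (hB k).isPredTime_debut
  · refine (graph_debut_subset fun ω => ?_).trans (hK.iInter_biUnion_pi_subset l)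
    rw [preimage_iInter]
    exact isClosed_iInter fun k => (hc k ω).isClosed
  · have : {ω | debut (⋂ k, B k) ω < ⊤} = ⋂ k, projOmega (B k) := by
      ext ω
      rw [mem_ofPred_eq, debut_lt_top_iff, projOmega_iInter_of_antitone hanti hc]
    rw [this]
    exact ge_of_tendsto (tendsto_measure_iInter_atTop
      (fun k => (hB k).measurableSet_projOmega.nullMeasurableSet)
      (fun m n h => image_mono (hanti h)) ⟨0, measure_ne_top P _⟩)
      (Eventually.of_forall fun k => (hPB k).le)

end

/-- Predictable Section Theorem: for every predictable set `P` and
`ε > 0` there is a predictable time `ρ` with graph inside `P` and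
`ℙ*(π_Ω(P)) − ℙ({ρ < ∞}) ≤ ε`. -/
theorem predictable_section {Ω : Type*} {F : MeasurableSpace Ω}
    (𝔽 : Filtration ℝ≥0 F) (P : Measure Ω) [IsProbabilityMeasure P]
    (S : Set (Ω × ℝ≥0)) (hS : MeasurableSet[predictableSigma 𝔽] S)
    (ε : ℝ≥0∞) (hε : 0 < ε) :
    ∃ ρ : Ω → ℝ≥0∞, IsPredTime 𝔽 ρ ∧ graph ρ ⊆ S ∧
      pstar P (projOmega S) - P {ω | ρ ω < ⊤} ≤ ε := by
  have hpstar : pstar P (projOmega S) = P (projOmega S) := (measure_eq_iInf _).symm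
  rw [hpstar]
  rcases le_or_gt (P (projOmega S)) ε with hle | hlt
  · exact ⟨fun _ => ⊤, isPredTime_top, fun p hp => by simp [graph] at hp,
      tsub_le_self.trans hle⟩
  · obtain ⟨ρ, hρ, hgraph, hP⟩ :=
      (isSuslin_of_measurableSet_predictableSigma hS).exists_isPredTime_graph_subset P
        (ENNReal.sub_lt_self (measure_ne_top P _) (hε.trans hlt).ne' hε.ne')
    exact ⟨ρ, hρ, hgraph, tsub_le_iff_tsub_le.1 hP⟩
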